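/- arXiv:1710.11478 — 2 statements merged into one kernel-verified Lean document; each statement's English description precedes it below -/
import Mathlib

section
/- Let B, S, C be entrywise nonnegative, σ > 0, δ > 0, and set B⁺ = U_B(B; δ). Then G_B(B, B; δ) − G_B(B⁺, B; δ) = (1/2)·Σ_m (b⁺_m − b_m)·D^m(δ)·(b⁺_m − b_m)ᵀ, where b_m and b⁺_m denote the m-th rows of B and B⁺; in particular this quantity is nonnegative. (Identity in the proof of the paper's theorem20.) -/
open Matrix Classical Filter

noncomputable section

/-- Squared Frobenius norm. -/
def frobSq {m n : ℕ} (X : Matrix (Fin m) (Fin n) ℝ) : ℝ := ∑ i, ∑ j, (X i j) ^ 2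

/-- The BNMtF objective J(B,S,C). -/
def objJ {M N P : ℕ} (A : Matrix (Fin M) (Fin N) ℝ) (α β : ℝ)
    (B : Matrix (Fin M) (Fin P) ℝ) (S : Matrix (Fin P) (Fin P) ℝ) (C : Matrix (Fin P) (Fin N) ℝ) : ℝ :=
  (1 / 2) * frobSq (A - B * S * C) + (α / 2) * frobSq (C * Cᵀ - 1) +
    (β / 2) * frobSq (Bᵀ * B - 1)

/-- ∇_B J. -/
def gradB {M N P : ℕ} (A : Matrix (Fin M) (Fin N) ℝ) (β : ℝ)
    (B : Matrix (Fin M) (Fin P) ℝ) (S : Matrix (Fin P) (Fin P) ℝ) (C : Matrix (Fin P) (Fin N) ℝ) : Matrix (Fin M) (Fin P) ℝ :=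
  B * S * C * Cᵀ * Sᵀ - A * Cᵀ * Sᵀ + β • (B * Bᵀ * B) - β • B

/-- ∇_C J. -/
def gradC {M N P : ℕ} (A : Matrix (Fin M) (Fin N) ℝ) (α : ℝ)
    (B : Matrix (Fin M) (Fin P) ℝ) (S : Matrix (Fin P) (Fin P) ℝ) (C : Matrix (Fin P) (Fin N) ℝ) : Matrix (Fin P) (Fin N) ℝ :=
  Sᵀ * Bᵀ * B * S * C - Sᵀ * Bᵀ * A + α • (C * Cᵀ * C) - α • C

/-- ∇_S J. -/
def gradS {M N P : ℕ} (A : Matrix (Fin M) (Fin N) ℝ)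
    (B : Matrix (Fin M) (Fin P) ℝ) (S : Matrix (Fin P) (Fin P) ℝ) (C : Matrix (Fin P) (Fin N) ℝ) : Matrix (Fin P) (Fin P) ℝ :=
  Bᵀ * B * S * C * Cᵀ - Bᵀ * A * Cᵀ

/-- B-part KKT conditions. -/
def KKTB {M N P : ℕ} (A : Matrix (Fin M) (Fin N) ℝ) (β : ℝ)
    (B : Matrix (Fin M) (Fin P) ℝ) (S : Matrix (Fin P) (Fin P) ℝ) (C : Matrix (Fin P) (Fin N) ℝ) : Prop :=
  ∀ m p, 0 ≤ gradB A β B S C m p ∧ gradB A β B S C m p * B m p = 0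

/-- C-part KKT conditions. -/
def KKTC {M N P : ℕ} (A : Matrix (Fin M) (Fin N) ℝ) (α : ℝ)
    (B : Matrix (Fin M) (Fin P) ℝ) (S : Matrix (Fin P) (Fin P) ℝ) (C : Matrix (Fin P) (Fin N) ℝ) : Prop :=
  ∀ q n, 0 ≤ gradC A α B S C q n ∧ gradC A α B S C q n * C q n = 0

/-- S-part KKT conditions. -/
def KKTS {M N P : ℕ} (A : Matrix (Fin M) (Fin N) ℝ)
    (B : Matrix (Fin M) (Fin P) ℝ) (S : Matrix (Fin P) (Fin P) ℝ) (C : Matrix (Fin P) (Fin N) ℝ) : Prop :=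
  ∀ p q, 0 ≤ gradS A B S C p q ∧ gradS A B S C p q * S p q = 0

/-- Full KKT conditions. -/
def KKT {M N P : ℕ} (A : Matrix (Fin M) (Fin N) ℝ) (α β : ℝ)
    (B : Matrix (Fin M) (Fin P) ℝ) (S : Matrix (Fin P) (Fin P) ℝ) (C : Matrix (Fin P) (Fin N) ℝ) : Prop :=
  KKTB A β B S C ∧ KKTS A B S C ∧ KKTC A α B S C

/-- B̄. -/
def Bbar {M N P : ℕ} (A : Matrix (Fin M) (Fin N) ℝ) (β σ : ℝ)
    (B : Matrix (Fin M) (Fin P) ℝ) (S : Matrix (Fin P) (Fin P) ℝ) (C : Matrix (Fin P) (Fin N) ℝ) : Matrix (Fin M) (Fin P) ℝ :=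
  Matrix.of fun m p => if 0 ≤ gradB A β B S C m p then B m p else max (B m p) σ

/-- Denominator matrix of the additive B-update. -/
def denomB {M N P : ℕ} (A : Matrix (Fin M) (Fin N) ℝ) (β σ : ℝ)
    (B : Matrix (Fin M) (Fin P) ℝ) (S : Matrix (Fin P) (Fin P) ℝ) (C : Matrix (Fin P) (Fin N) ℝ) : Matrix (Fin M) (Fin P) ℝ :=
  Bbar A β σ B S C * S * C * Cᵀ * Sᵀ +
    β • (Bbar A β σ B S C * (Bbar A β σ B S C)ᵀ * Bbar A β σ B S C)

/-- Additive B-update U_B(B; δ). -/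
def UB {M N P : ℕ} (A : Matrix (Fin M) (Fin N) ℝ) (β σ : ℝ)
    (B : Matrix (Fin M) (Fin P) ℝ) (S : Matrix (Fin P) (Fin P) ℝ) (C : Matrix (Fin P) (Fin N) ℝ) (δ : ℝ) : Matrix (Fin M) (Fin P) ℝ :=
  Matrix.of fun m p =>
    B m p - Bbar A β σ B S C m p * gradB A β B S C m p / (denomB A β σ B S C m p + δ)

/-- I_m : set of non-KKT indices in row m of B. -/
def IsetB {M N P : ℕ} (A : Matrix (Fin M) (Fin N) ℝ) (β : ℝ)
    (B : Matrix (Fin M) (Fin P) ℝ) (S : Matrix (Fin P) (Fin P) ℝ) (C : Matrix (Fin P) (Fin N) ℝ) (m : Fin M) : Set (Fin P) :=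
  {p | (0 < B m p ∧ gradB A β B S C m p ≠ 0) ∨ (B m p = 0 ∧ gradB A β B S C m p < 0)}

/-- Diagonal entries d^m_{pp}(δ). -/
def dB {M N P : ℕ} (A : Matrix (Fin M) (Fin N) ℝ) (β σ : ℝ)
    (B : Matrix (Fin M) (Fin P) ℝ) (S : Matrix (Fin P) (Fin P) ℝ) (C : Matrix (Fin P) (Fin N) ℝ) (δ : ℝ) (m : Fin M) (p : Fin P) : ℝ :=
  if p ∈ IsetB A β B S C m then (denomB A β σ B S C m p + δ) / Bbar A β σ B S C m p else 0

/-- Auxiliary function G_B(B′, B; δ). -/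
def GB {M N P : ℕ} (A : Matrix (Fin M) (Fin N) ℝ) (α β σ : ℝ)
    (B : Matrix (Fin M) (Fin P) ℝ) (S : Matrix (Fin P) (Fin P) ℝ) (C : Matrix (Fin P) (Fin N) ℝ) (B' : Matrix (Fin M) (Fin P) ℝ) (δ : ℝ) : ℝ :=
  objJ A α β B S C + (∑ m, ∑ p, (B' m p - B m p) * gradB A β B S C m p) +
    (1 / 2) * ∑ m, ∑ p, dB A β σ B S C δ m p * (B' m p - B m p) ^ 2

/-- C̄. -/
def Cbar {M N P : ℕ} (A : Matrix (Fin M) (Fin N) ℝ) (α σ : ℝ)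
    (B : Matrix (Fin M) (Fin P) ℝ) (S : Matrix (Fin P) (Fin P) ℝ) (C : Matrix (Fin P) (Fin N) ℝ) : Matrix (Fin P) (Fin N) ℝ :=
  Matrix.of fun q n => if 0 ≤ gradC A α B S C q n then C q n else max (C q n) σ

/-- Denominator matrix of the additive C-update. -/
def denomC {M N P : ℕ} (A : Matrix (Fin M) (Fin N) ℝ) (α σ : ℝ)
    (B : Matrix (Fin M) (Fin P) ℝ) (S : Matrix (Fin P) (Fin P) ℝ) (C : Matrix (Fin P) (Fin N) ℝ) : Matrix (Fin P) (Fin N) ℝ :=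
  Sᵀ * Bᵀ * B * S * Cbar A α σ B S C +
    α • (Cbar A α σ B S C * (Cbar A α σ B S C)ᵀ * Cbar A α σ B S C)

/-- Additive C-update U_C(C; δ). -/
def UC {M N P : ℕ} (A : Matrix (Fin M) (Fin N) ℝ) (α σ : ℝ)
    (B : Matrix (Fin M) (Fin P) ℝ) (S : Matrix (Fin P) (Fin P) ℝ) (C : Matrix (Fin P) (Fin N) ℝ) (δ : ℝ) : Matrix (Fin P) (Fin N) ℝ :=
  Matrix.of fun q n =>
    C q n - Cbar A α σ B S C q n * gradC A α B S C q n / (denomC A α σ B S C q n + δ)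

/-- S̄. -/
def Sbar {M N P : ℕ} (A : Matrix (Fin M) (Fin N) ℝ) (σ : ℝ)
    (B : Matrix (Fin M) (Fin P) ℝ) (S : Matrix (Fin P) (Fin P) ℝ) (C : Matrix (Fin P) (Fin N) ℝ) : Matrix (Fin P) (Fin P) ℝ :=
  Matrix.of fun p q => if 0 ≤ gradS A B S C p q then S p q else max (S p q) σ

/-- Denominator matrix of the additive S-update. -/
def denomS {M N P : ℕ} (A : Matrix (Fin M) (Fin N) ℝ) (σ : ℝ)
    (B : Matrix (Fin M) (Fin P) ℝ) (S : Matrix (Fin P) (Fin P) ℝ) (C : Matrix (Fin P) (Fin N) ℝ) : Matrix (Fin P) (Fin P) ℝ :=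
  Bᵀ * B * Sbar A σ B S C * C * Cᵀ

/-- Additive S-update U_S(S; δ). -/
def US {M N P : ℕ} (A : Matrix (Fin M) (Fin N) ℝ) (σ : ℝ)
    (B : Matrix (Fin M) (Fin P) ℝ) (S : Matrix (Fin P) (Fin P) ℝ) (C : Matrix (Fin P) (Fin N) ℝ) (δ : ℝ) : Matrix (Fin P) (Fin P) ℝ :=
  Matrix.of fun p q =>
    S p q - Sbar A σ B S C p q * gradS A B S C p q / (denomS A σ B S C p q + δ)

/-- I_q : set of non-KKT indices in column q of S. -/
def IsetS {M N P : ℕ} (A : Matrix (Fin M) (Fin N) ℝ)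
    (B : Matrix (Fin M) (Fin P) ℝ) (S : Matrix (Fin P) (Fin P) ℝ) (C : Matrix (Fin P) (Fin N) ℝ) (q : Fin P) : Set (Fin P) :=
  {p | (0 < S p q ∧ gradS A B S C p q ≠ 0) ∨ (S p q = 0 ∧ gradS A B S C p q < 0)}

/-- Diagonal entries d^q_{pp}(δ). -/
def dS {M N P : ℕ} (A : Matrix (Fin M) (Fin N) ℝ) (σ : ℝ)
    (B : Matrix (Fin M) (Fin P) ℝ) (S : Matrix (Fin P) (Fin P) ℝ) (C : Matrix (Fin P) (Fin N) ℝ) (δ : ℝ) (p q : Fin P) : ℝ :=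
  if p ∈ IsetS A B S C q then (denomS A σ B S C p q + δ) / Sbar A σ B S C p q else 0

/-- Auxiliary function G_S(S′, S; δ). -/
def GS {M N P : ℕ} (A : Matrix (Fin M) (Fin N) ℝ) (α β σ : ℝ)
    (B : Matrix (Fin M) (Fin P) ℝ) (S : Matrix (Fin P) (Fin P) ℝ) (C : Matrix (Fin P) (Fin N) ℝ) (S' : Matrix (Fin P) (Fin P) ℝ) (δ : ℝ) : ℝ :=
  objJ A α β B S C + (∑ p, ∑ q, (S' p q - S p q) * gradS A B S C p q) +
    (1 / 2) * ∑ q, ∑ p, dS A σ B S C δ p q * (S' p q - S p q) ^ 2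

lemma entry_mul_nonneg {a b c : ℕ} (X : Matrix (Fin a) (Fin b) ℝ) (Y : Matrix (Fin b) (Fin c) ℝ)
    (hX : ∀ i j, 0 ≤ X i j) (hY : ∀ i j, 0 ≤ Y i j) : ∀ i j, 0 ≤ (X * Y) i j := by
  intro i j
  rw [Matrix.mul_apply]
  exact Finset.sum_nonneg fun k _ => mul_nonneg (hX i k) (hY k j)

lemma bbar_nonneg {M N P : ℕ} (A : Matrix (Fin M) (Fin N) ℝ) (β σ : ℝ) (hσ : 0 < σ)
    (B : Matrix (Fin M) (Fin P) ℝ) (S : Matrix (Fin P) (Fin P) ℝ) (C : Matrix (Fin P) (Fin N) ℝ)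
    (hB : ∀ m p, 0 ≤ B m p) : ∀ m p, 0 ≤ Bbar A β σ B S C m p := by
  intro m p
  simp only [Bbar, Matrix.of_apply]
  split
  · exact hB m p
  · exact le_trans hσ.le (le_max_right _ _)

lemma denomB_nonneg {M N P : ℕ} (A : Matrix (Fin M) (Fin N) ℝ) (β σ : ℝ)
    (hβ : 0 < β) (hσ : 0 < σ)
    (B : Matrix (Fin M) (Fin P) ℝ) (S : Matrix (Fin P) (Fin P) ℝ) (C : Matrix (Fin P) (Fin N) ℝ)
    (hB : ∀ m p, 0 ≤ B m p) (hS : ∀ p q, 0 ≤ S p q) (hC : ∀ q n, 0 ≤ C q n) :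
    ∀ m p, 0 ≤ denomB A β σ B S C m p := by
  intro m p
  have hbar := bbar_nonneg A β σ hσ B S C hB
  have h1 := entry_mul_nonneg _ _ hbar hS
  have h2 := entry_mul_nonneg _ _ h1 hC
  have h3 := entry_mul_nonneg _ _ h2 (fun i j => hC j i)
  have h4 := entry_mul_nonneg _ _ h3 (fun i j => hS j i)
  have g1 := entry_mul_nonneg _ _ hbar (fun i j => hbar j i)
  have g2 := entry_mul_nonneg _ _ g1 hbar
  simp only [denomB, Matrix.add_apply, Matrix.smul_apply, smul_eq_mul]
  exact add_nonneg (h4 m p) (mul_nonneg hβ.le (g2 m p))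

lemma bbar_pos_of_mem {M N P : ℕ} (A : Matrix (Fin M) (Fin N) ℝ) (β σ : ℝ) (hσ : 0 < σ)
    (B : Matrix (Fin M) (Fin P) ℝ) (S : Matrix (Fin P) (Fin P) ℝ) (C : Matrix (Fin P) (Fin N) ℝ)
    {m : Fin M} {p : Fin P} (hI : p ∈ IsetB A β B S C m) : 0 < Bbar A β σ B S C m p := by
  rcases hI with ⟨hBp, _⟩ | ⟨hBz, hgneg⟩
  · simp only [Bbar, Matrix.of_apply]
    split
    · exact hBp
    · exact lt_of_lt_of_le hBp (le_max_left _ _)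
  · simp only [Bbar, Matrix.of_apply, if_neg (not_le.mpr hgneg)]
    exact lt_max_of_lt_right hσ

lemma keyB {M N P : ℕ} (A : Matrix (Fin M) (Fin N) ℝ) (β σ : ℝ)
    (hβ : 0 < β) (hσ : 0 < σ)
    (B : Matrix (Fin M) (Fin P) ℝ) (S : Matrix (Fin P) (Fin P) ℝ) (C : Matrix (Fin P) (Fin N) ℝ)
    (hB : ∀ m p, 0 ≤ B m p) (hS : ∀ p q, 0 ≤ S p q) (hC : ∀ q n, 0 ≤ C q n)
    (δ : ℝ) (hδ : 0 < δ) (m : Fin M) (p : Fin P) :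
    (UB A β σ B S C δ m p - B m p) * gradB A β B S C m p
      = -(dB A β σ B S C δ m p * (UB A β σ B S C δ m p - B m p) ^ 2) := by
  have hDpos : 0 < denomB A β σ B S C m p + δ :=
    add_pos_of_nonneg_of_pos (denomB_nonneg A β σ hβ hσ B S C hB hS hC m p) hδ
  have ht : UB A β σ B S C δ m p - B m p
      = -(Bbar A β σ B S C m p * gradB A β B S C m p / (denomB A β σ B S C m p + δ)) := by
    simp only [UB, Matrix.of_apply]; ring
  by_cases hI : p ∈ IsetB A β B S C m
  · have hbbpos := bbar_pos_of_mem A β σ hσ B S C hI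
    rw [ht]
    simp only [dB, if_pos hI]
    field_simp
  · simp only [dB, if_neg hI]
    rw [ht]
    by_cases hg : gradB A β B S C m p = 0
    · simp [hg]
    · have hBz : B m p = 0 := by
        by_contra h
        exact hI (Or.inl ⟨lt_of_le_of_ne (hB m p) (Ne.symm h), hg⟩)
      have hg0 : 0 ≤ gradB A β B S C m p := by
        by_contra h
        exact hI (Or.inr ⟨hBz, not_le.mp h⟩)
      have hbz : Bbar A β σ B S C m p = 0 := by
        simp [Bbar, if_pos hg0, hBz]
      simp [hbz]

lemma dB_nonneg {M N P : ℕ} (A : Matrix (Fin M) (Fin N) ℝ) (β σ : ℝ)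
    (hβ : 0 < β) (hσ : 0 < σ)
    (B : Matrix (Fin M) (Fin P) ℝ) (S : Matrix (Fin P) (Fin P) ℝ) (C : Matrix (Fin P) (Fin N) ℝ)
    (hB : ∀ m p, 0 ≤ B m p) (hS : ∀ p q, 0 ≤ S p q) (hC : ∀ q n, 0 ≤ C q n)
    (δ : ℝ) (hδ : 0 < δ) (m : Fin M) (p : Fin P) : 0 ≤ dB A β σ B S C δ m p := by
  unfold dB
  split
  · next hI =>
    exact div_nonneg
      (add_pos_of_nonneg_of_pos (denomB_nonneg A β σ hβ hσ B S C hB hS hC m p) hδ).le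
      (bbar_pos_of_mem A β σ hσ B S C hI).le
  · exact le_refl 0

theorem stmt_16 {M N P : ℕ} (A : Matrix (Fin M) (Fin N) ℝ) (hA : ∀ i j, 0 ≤ A i j)
    (α β σ : ℝ) (hα : 0 < α) (hβ : 0 < β) (hσ : 0 < σ)
    (B : Matrix (Fin M) (Fin P) ℝ) (S : Matrix (Fin P) (Fin P) ℝ) (C : Matrix (Fin P) (Fin N) ℝ)
    (hB : ∀ m p, 0 ≤ B m p) (hS : ∀ p q, 0 ≤ S p q) (hC : ∀ q n, 0 ≤ C q n)
    (δ : ℝ) (hδ : 0 < δ) :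
    GB A α β σ B S C B δ - GB A α β σ B S C (UB A β σ B S C δ) δ =
      (1 / 2) * ∑ m, ∑ p, dB A β σ B S C δ m p * (UB A β σ B S C δ m p - B m p) ^ 2 ∧
    0 ≤ (1 / 2) * ∑ m, ∑ p, dB A β σ B S C δ m p * (UB A β σ B S C δ m p - B m p) ^ 2 := by
  have hQnn : 0 ≤ (1 / 2) * ∑ m, ∑ p, dB A β σ B S C δ m p * (UB A β σ B S C δ m p - B m p) ^ 2 := by
    apply mul_nonneg (by norm_num)
    refine Finset.sum_nonneg fun m _ => Finset.sum_nonneg fun p _ => ?_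
    exact mul_nonneg (dB_nonneg A β σ hβ hσ B S C hB hS hC δ hδ m p) (sq_nonneg _)
  refine ⟨?_, hQnn⟩
  have h0 : GB A α β σ B S C B δ = objJ A α β B S C := by
    simp [GB]
  have hL : (∑ m, ∑ p, (UB A β σ B S C δ m p - B m p) * gradB A β B S C m p)
      = -∑ m, ∑ p, dB A β σ B S C δ m p * (UB A β σ B S C δ m p - B m p) ^ 2 := by
    rw [← Finset.sum_neg_distrib]
    refine Finset.sum_congr rfl fun m _ => ?_
    rw [← Finset.sum_neg_distrib]
    refine Finset.sum_congr rfl fun p _ => ?_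
    rw [keyB A β σ hβ hσ B S C hB hS hC δ hδ m p]
  rw [h0, GB, hL]
  ring
end
end

section
/- Let B, S, C be entrywise nonnegative, σ > 0, δ > 0, and set S⁺ = U_S(S; δ). Then G_S(S, S; δ) − G_S(S⁺, S; δ) = (1/2)·Σ_q (s⁺_q − s_q)ᵀ·D^q(δ)·(s⁺_q − s_q), where s_q and s⁺_q denote the q-th columns of S and S⁺; in particular this quantity is nonnegative. (Identity in the proof of the paper's Theorem 28.) -/
open Matrix Classical Filter

noncomputable section

lemma mul_entry_nonneg {a b c : ℕ} {X : Matrix (Fin a) (Fin b) ℝ} {Y : Matrix (Fin b) (Fin c) ℝ}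
    (hX : ∀ i j, 0 ≤ X i j) (hY : ∀ i j, 0 ≤ Y i j) : ∀ i j, 0 ≤ (X * Y) i j := by
  intro i j
  rw [Matrix.mul_apply]
  exact Finset.sum_nonneg fun k _ => mul_nonneg (hX i k) (hY k j)

theorem stmt_17 {M N P : ℕ} (A : Matrix (Fin M) (Fin N) ℝ) (hA : ∀ i j, 0 ≤ A i j)
    (α β σ : ℝ) (hα : 0 < α) (hβ : 0 < β) (hσ : 0 < σ)
    (B : Matrix (Fin M) (Fin P) ℝ) (S : Matrix (Fin P) (Fin P) ℝ) (C : Matrix (Fin P) (Fin N) ℝ)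
    (hB : ∀ m p, 0 ≤ B m p) (hS : ∀ p q, 0 ≤ S p q) (hC : ∀ q n, 0 ≤ C q n)
    (δ : ℝ) (hδ : 0 < δ) :
    GS A α β σ B S C S δ - GS A α β σ B S C (US A σ B S C δ) δ =
      (1 / 2) * ∑ q, ∑ p, dS A σ B S C δ p q * (US A σ B S C δ p q - S p q) ^ 2 ∧
    0 ≤ (1 / 2) * ∑ q, ∑ p, dS A σ B S C δ p q * (US A σ B S C δ p q - S p q) ^ 2 := by
  have hSbar : ∀ p q, 0 ≤ Sbar A σ B S C p q := by
    intro p q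
    simp only [Sbar, Matrix.of_apply]
    split
    · exact hS p q
    · exact le_max_of_le_right hσ.le
  have hBt : ∀ i j, (0:ℝ) ≤ Bᵀ i j := fun i j => hB j i
  have hCt : ∀ i j, (0:ℝ) ≤ Cᵀ i j := fun i j => hC j i
  have hdenom : ∀ p q, 0 ≤ denomS A σ B S C p q := by
    intro p q
    exact mul_entry_nonneg (mul_entry_nonneg (mul_entry_nonneg
      (mul_entry_nonneg hBt hB) hSbar) hC) hCt p q
  have hden : ∀ p q, 0 < denomS A σ B S C p q + δ := fun p q =>
    add_pos_of_nonneg_of_pos (hdenom p q) hδ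
  have key : ∀ p q,
      (US A σ B S C δ p q - S p q) * gradS A B S C p q
        = - (dS A σ B S C δ p q * (US A σ B S C δ p q - S p q) ^ 2) := by
    intro p q
    have hUS : US A σ B S C δ p q - S p q
        = - (Sbar A σ B S C p q * gradS A B S C p q / (denomS A σ B S C p q + δ)) := by
      simp [US]
    by_cases hmem : p ∈ IsetS A B S C q
    · have hsb : 0 < Sbar A σ B S C p q := by
        rcases hmem with ⟨h1, _⟩ | ⟨h1, h2⟩
        · simp only [Sbar, Matrix.of_apply]
          split
          · exact h1
          · exact lt_max_of_lt_left h1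
        · simp only [Sbar, Matrix.of_apply, h1, not_le.mpr h2, if_neg]
          simpa [h1] using lt_max_of_lt_right (b := S p q) hσ
      have hs : Sbar A σ B S C p q ≠ 0 := hsb.ne'
      have hd : denomS A σ B S C p q + δ ≠ 0 := (hden p q).ne'
      simp only [dS, if_pos hmem, hUS]
      field_simp
    · have hz : Sbar A σ B S C p q * gradS A B S C p q = 0 := by
        simp only [IsetS, Set.mem_setOf_eq, not_or, not_and_or, not_lt, not_not] at hmem
        obtain ⟨h1, h2⟩ := hmem
        by_cases hg : gradS A B S C p q = 0
        · simp [hg]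
        · have hS0 : S p q = 0 := le_antisymm (h1.resolve_right (fun h => hg h)) (hS p q)
          have hgpos : 0 ≤ gradS A B S C p q := by
            rcases h2 with h | h
            · exact absurd hS0 h
            · exact h
          simp [Sbar, hgpos, hS0]
      simp only [dS, if_neg hmem, hUS, hz]
      simp
  have hnn : 0 ≤ (1 / 2) * ∑ q, ∑ p, dS A σ B S C δ p q * (US A σ B S C δ p q - S p q) ^ 2 := by
    apply mul_nonneg (by norm_num)
    apply Finset.sum_nonneg; intro q _
    apply Finset.sum_nonneg; intro p _
    apply mul_nonneg _ (sq_nonneg _)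
    unfold dS
    split
    · exact div_nonneg (hden p q).le (hSbar p q)
    · exact le_refl 0
  refine ⟨?_, hnn⟩
  have hsum : (∑ p, ∑ q, (US A σ B S C δ p q - S p q) * gradS A B S C p q)
      = - ∑ q, ∑ p, dS A σ B S C δ p q * (US A σ B S C δ p q - S p q) ^ 2 := by
    rw [Finset.sum_comm]
    rw [← Finset.sum_neg_distrib]
    congr 1; ext q
    rw [← Finset.sum_neg_distrib]
    congr 1; ext p
    rw [key p q]
  simp only [GS, hsum, sub_self, zero_mul, Finset.sum_const_zero]
  have hz : (∑ x : Fin P, ∑ y : Fin P, dS A σ B S C δ y x * (0:ℝ) ^ 2) = 0 := by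
    simp
  rw [hz]
  ring
end
end
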